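/- arXiv:0902.1586 — 4 statements merged into one kernel-verified Lean document; each statement's English description precedes it below -/
import Mathlib

section
/- There exists a constant D > 0, depending only on α, C₋₁ and C₂, with the following property. Let λ > 0 and δ ≥ 0. Let B' : V × V → ℝ be a second bilinear form satisfying α⁻¹·s(u,u) ≤ B'(u,u), |B'(u,v)| ≤ α·√(s(u,u)·s(v,v)), and |B(u,v) − B'(u,v)| ≤ δ·√(s(u,u)·s(v,v)) for all u,v ∈ V. Let h, h' ∈ H with ‖h‖_H ≤ C₂, ‖h'‖_H ≤ C₂, ‖h − h'‖_H ≤ C₂·δ, and let F, F' : V → ℝ be linear with |F(v)| ≤ C₋₁·√(s(v,v)), |F'(v)| ≤ C₋₁·√(s(v,v)), |F(v) − F'(v)| ≤ C₋₁·δ·√(s(v,v)) for all v ∈ V. If u ∈ V satisfies λ⟨u,v⟩_H + B(u,v) = ⟨h,v⟩_H + F(v) for all v ∈ V and u' ∈ V satisfies λ⟨u',v⟩_H + B'(u',v) = ⟨h',v⟩_H + F'(v) for all v ∈ V, then λ‖u − u'‖_H² + s(u − u', u − u') ≤ D·(1 + C₂²/λ)·δ². (Abstract form of the Lipschitz estimate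 (19b) of Proposition 6.1.) -/
/-!
Testing the equation of `u'` with `v = u'` and applying Young's inequality gives the a priori
bound `s(u', u') ≲ C₂²/λ + C₋₁²`. Subtracting the two equations and testing with `w = u - u'`
gives `λ‖w‖² + B(w, w) = ⟨h - h', w⟩ + (F - F')(w) + (B' - B)(u', w)`, whose right-hand side is
at most `C₂ δ ‖w‖ + (C₋₁ + √s(u', u')) δ √s(w, w)`. Coercivity of `B` and Young's inequality
absorb `‖w‖` and `√s(w, w)` into the left-hand side, and the a priori bound finishes the estimate.
-/

open scoped RealInnerProductSpace

theorem add_sq_le_of_le_linear {lam c a b x t : ℝ} (hlam : 0 < lam) (hc : 0 < c)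
    (h : lam * x ^ 2 + c * t ^ 2 ≤ a * x + b * t) :
    lam * x ^ 2 + c * t ^ 2 ≤ a ^ 2 / lam + b ^ 2 / c := by
  have young_x : 2 * (a * x) ≤ lam * x ^ 2 + a ^ 2 / lam := by
    have : lam * x ^ 2 + a ^ 2 / lam - 2 * (a * x) = (lam * x - a) ^ 2 / lam := by
      field_simp; ring
    linarith [div_nonneg (sq_nonneg (lam * x - a)) hlam.le]
  have young_t : 2 * (b * t) ≤ c * t ^ 2 + b ^ 2 / c := by
    have : c * t ^ 2 + b ^ 2 / c - 2 * (b * t) = (c * t - b) ^ 2 / c := by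
      field_simp; ring
    linarith [div_nonneg (sq_nonneg (c * t - b)) hc.le]
  linarith

theorem add_le_lipschitz_bound_of_energy_le {α q Cm1 σ δ X S : ℝ} (hα : 0 < α) (hq : 0 ≤ q)
    (hX : 0 ≤ X) (hS : 0 ≤ S) (hσ : α⁻¹ * σ ^ 2 ≤ q + α * Cm1 ^ 2)
    (h : X + α⁻¹ * S ≤ q * δ ^ 2 + α * ((Cm1 + σ) * δ) ^ 2) :
    X + S ≤ (1 + α) * (1 + 2 * α ^ 2) * (1 + 2 * α * Cm1 ^ 2) * (1 + q) * δ ^ 2 := by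
  set R := (q + α * (Cm1 + σ) ^ 2) * δ ^ 2
  have hXS : X + α⁻¹ * S ≤ R := h.trans_eq (by ring)
  have hSR : S ≤ α * R := (inv_mul_le_iff₀ hα).1 (by linarith)
  have hXR : X ≤ R := by linarith [mul_nonneg (inv_nonneg.2 hα.le) hS]
  have hσ' : σ ^ 2 ≤ α * (q + α * Cm1 ^ 2) := (inv_mul_le_iff₀ hα).1 hσ
  have hCσ : (Cm1 + σ) ^ 2 ≤ 2 * Cm1 ^ 2 + 2 * σ ^ 2 := by nlinarith [sq_nonneg (Cm1 - σ)]
  have hR : q + α * (Cm1 + σ) ^ 2 ≤ (1 + 2 * α ^ 2) * (1 + 2 * α * Cm1 ^ 2) * (1 + q) := by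
    nlinarith [mul_nonneg hα.le (sq_nonneg Cm1), mul_nonneg hq (mul_nonneg hα.le (sq_nonneg Cm1))]
  calc X + S ≤ (1 + α) * R := by linarith
    _ ≤ (1 + α) * ((1 + 2 * α ^ 2) * (1 + 2 * α * Cm1 ^ 2) * (1 + q) * δ ^ 2) := by
      gcongr
      exact mul_le_mul_of_nonneg_right hR (sq_nonneg δ)
    _ = _ := by ring

section Energy

variable {H V : Type*} [NormedAddCommGroup H] [InnerProductSpace ℝ H]
  [AddCommGroup V] [Module ℝ V] (ι : V →ₗ[ℝ] H) (s B : V →ₗ[ℝ] V →ₗ[ℝ] ℝ)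

theorem energy_le_of_tested_eq {α lam a b r : ℝ} {g : H} {w : V} (hα : 0 < α) (hlam : 0 < lam)
    (hs : 0 ≤ s w w) (hcoer : α⁻¹ * s w w ≤ B w w) (hg : ‖g‖ ≤ a)
    (hr : r ≤ b * √(s w w)) (heq : lam * ‖ι w‖ ^ 2 + B w w = ⟪g, ι w⟫ + r) :
    lam * ‖ι w‖ ^ 2 + α⁻¹ * s w w ≤ a ^ 2 / lam + α * b ^ 2 := by
  have hgw : ⟪g, ι w⟫ ≤ a * ‖ι w‖ :=
    (real_inner_le_norm g (ι w)).trans (mul_le_mul_of_nonneg_right hg (norm_nonneg _))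
  have key := add_sq_le_of_le_linear hlam (inv_pos.2 hα)
    (x := ‖ι w‖) (t := √(s w w)) (a := a) (b := b)
  rw [Real.sq_sqrt hs, div_inv_eq_mul, mul_comm (b ^ 2)] at key
  exact key (by linarith)

theorem solutions_sub_tested_eq {B' : V →ₗ[ℝ] V →ₗ[ℝ] ℝ} {lam : ℝ} {h h' : H} {F F' : V →ₗ[ℝ] ℝ}
    {u u' : V} (hu : ∀ v, lam * ⟪ι u, ι v⟫ + B u v = ⟪h, ι v⟫ + F v)
    (hu' : ∀ v, lam * ⟪ι u', ι v⟫ + B' u' v = ⟪h', ι v⟫ + F' v) :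
    lam * ‖ι (u - u')‖ ^ 2 + B (u - u') (u - u') =
      ⟪h - h', ι (u - u')⟫ + (F (u - u') - F' (u - u') + (B' u' (u - u') - B u' (u - u'))) := by
  have e := hu (u - u')
  have e' := hu' (u - u')
  rw [← real_inner_self_eq_norm_sq, map_sub ι u u', inner_sub_left, inner_sub_left, map_sub B,
    LinearMap.sub_apply]
  rw [map_sub ι u u'] at e e'
  linear_combination e - e'

end Energy

theorem abstract_lipschitz_estimate_general
    {H V : Type*}
    [NormedAddCommGroup H] [InnerProductSpace ℝ H]
    [NormedAddCommGroup V] [InnerProductSpace ℝ V]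
    (ι : V →ₗ[ℝ] H)
    (s : V →ₗ[ℝ] V →ₗ[ℝ] ℝ)
    (hs_pos : ∀ u : V, 0 ≤ s u u)
    (B : V →ₗ[ℝ] V →ₗ[ℝ] ℝ) (α : ℝ) (hα : 0 < α)
    (hB_coer : ∀ u : V, α⁻¹ * s u u ≤ B u u)
    (C2 Cm1 : ℝ) :
    ∃ D : ℝ, 0 < D ∧
      ∀ lam : ℝ, 0 < lam →
      ∀ δ : ℝ, 0 ≤ δ →
      ∀ B' : V →ₗ[ℝ] V →ₗ[ℝ] ℝ,
        (∀ u : V, α⁻¹ * s u u ≤ B' u u) →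
        (∀ u v : V, |B' u v| ≤ α * Real.sqrt (s u u * s v v)) →
        (∀ u v : V, |B u v - B' u v| ≤ δ * Real.sqrt (s u u * s v v)) →
      ∀ h h' : H, ‖h‖ ≤ C2 → ‖h'‖ ≤ C2 → ‖h - h'‖ ≤ C2 * δ →
      ∀ F F' : V →ₗ[ℝ] ℝ,
        (∀ v : V, |F v| ≤ Cm1 * Real.sqrt (s v v)) →
        (∀ v : V, |F' v| ≤ Cm1 * Real.sqrt (s v v)) →
        (∀ v : V, |F v - F' v| ≤ Cm1 * δ * Real.sqrt (s v v)) →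
      ∀ u u' : V,
        (∀ v : V, lam * ⟪ι u, ι v⟫ + B u v = ⟪h, ι v⟫ + F v) →
        (∀ v : V, lam * ⟪ι u', ι v⟫ + B' u' v = ⟪h', ι v⟫ + F' v) →
        lam * ‖ι u - ι u'‖ ^ 2 + s (u - u') (u - u') ≤
          D * (1 + C2 ^ 2 / lam) * δ ^ 2 := by
  refine ⟨(1 + α) * (1 + 2 * α ^ 2) * (1 + 2 * α * Cm1 ^ 2), by positivity, ?_⟩
  intro lam hlam δ _ B' hB'_coer _ hBB' h h' _ hh' hhh' F F' _ hF' hFF' u u' hu hu'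
  set w := u - u'
  set σ := √(s u' u')
  have apriori := energy_le_of_tested_eq ι s B' hα hlam (hs_pos u') (hB'_coer u') hh'
    (le_abs_self _ |>.trans (hF' u')) (by simpa only [real_inner_self_eq_norm_sq] using hu' u')
  have hrhs : F w - F' w + (B' u' w - B u' w) ≤ (Cm1 + σ) * δ * √(s w w) := by
    have hB := neg_le_of_abs_le (hBB' u' w)
    rw [Real.sqrt_mul (hs_pos u')] at hB
    linarith [le_abs_self (F w - F' w) |>.trans (hFF' w)]
  have hdiff := energy_le_of_tested_eq ι s B hα hlam (hs_pos w) (hB_coer w)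
    hhh' hrhs (solutions_sub_tested_eq ι B hu hu')
  have hσ : α⁻¹ * σ ^ 2 ≤ C2 ^ 2 / lam + α * Cm1 ^ 2 := by
    rw [Real.sq_sqrt (hs_pos u')]
    linarith [mul_nonneg hlam.le (sq_nonneg ‖ι u'‖)]
  rw [← map_sub]
  refine add_le_lipschitz_bound_of_energy_le hα (by positivity) (by positivity) (hs_pos w) hσ ?_
  convert hdiff using 2
  ring

/-- Abstract Lipschitz estimate (19b) of Proposition 6.1:
there is a constant `D > 0`, depending only on `α`, `C₋₁` and `C₂`, such that
if two resolvent problems (for forms `B`, `B'` and data `(h,F)`, `(h',F')`)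
differ by at most `δ`, then their solutions satisfy
`λ‖u − u'‖² + s(u − u', u − u') ≤ D(1 + C₂²/λ)·δ²`. -/
theorem abstract_lipschitz_estimate
    {H V : Type*}
    [NormedAddCommGroup H] [InnerProductSpace ℝ H] [CompleteSpace H]
    [NormedAddCommGroup V] [InnerProductSpace ℝ V] [CompleteSpace V]
    (ι : V →ₗ[ℝ] H) (hι_inj : Function.Injective ι) (hι_dense : DenseRange ι)
    (s : V →ₗ[ℝ] V →ₗ[ℝ] ℝ)
    (hs_symm : ∀ u v : V, s u v = s v u)
    (hs_pos : ∀ u : V, 0 ≤ s u u)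
    (hPi : ∀ u v : V, ⟪u, v⟫ = ⟪ι u, ι v⟫ + s u v)
    (B : V →ₗ[ℝ] V →ₗ[ℝ] ℝ) (α : ℝ) (hα : 0 < α)
    (hB_coer : ∀ u : V, α⁻¹ * s u u ≤ B u u)
    (hB_bdd : ∀ u v : V, |B u v| ≤ α * Real.sqrt (s u u * s v v))
    (C2 Cm1 : ℝ) (hC2 : 0 ≤ C2) (hCm1 : 0 ≤ Cm1) :
    ∃ D : ℝ, 0 < D ∧
      ∀ lam : ℝ, 0 < lam →
      ∀ δ : ℝ, 0 ≤ δ →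
      ∀ B' : V →ₗ[ℝ] V →ₗ[ℝ] ℝ,
        (∀ u : V, α⁻¹ * s u u ≤ B' u u) →
        (∀ u v : V, |B' u v| ≤ α * Real.sqrt (s u u * s v v)) →
        (∀ u v : V, |B u v - B' u v| ≤ δ * Real.sqrt (s u u * s v v)) →
      ∀ h h' : H, ‖h‖ ≤ C2 → ‖h'‖ ≤ C2 → ‖h - h'‖ ≤ C2 * δ →
      ∀ F F' : V →ₗ[ℝ] ℝ,
        (∀ v : V, |F v| ≤ Cm1 * Real.sqrt (s v v)) →
        (∀ v : V, |F' v| ≤ Cm1 * Real.sqrt (s v v)) →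
        (∀ v : V, |F v - F' v| ≤ Cm1 * δ * Real.sqrt (s v v)) →
      ∀ u u' : V,
        (∀ v : V, lam * ⟪ι u, ι v⟫ + B u v = ⟪h, ι v⟫ + F v) →
        (∀ v : V, lam * ⟪ι u', ι v⟫ + B' u' v = ⟪h', ι v⟫ + F' v) →
        lam * ‖ι u - ι u'‖ ^ 2 + s (u - u') (u - u') ≤
          D * (1 + C2 ^ 2 / lam) * δ ^ 2 :=
  abstract_lipschitz_estimate_general ι s hs_pos B α hα hB_coer C2 Cm1
end

section
/- Let D be a real Hilbert space, M > 0, and T : D × D → ℝ a continuous bilinear form with T(x,x) ≥ M⁻¹·‖x‖² for all x ∈ D. Let ξ ∈ D, let (ξ_n) be a sequence in D converging weakly to ξ, and let (a_n) be nonnegative real numbers such that a_n + T(ξ_n, ξ_n) = T(ξ, ξ_n) for every n. Then ‖ξ_n − ξ‖ → 0 and a_n → 0 as n → ∞. (This is the key convergence mechanism in the proofs of Propositions 6.3 and 7.1: the weakly convergent corrector gradients together with the energy identity λ|u_λ|² + T(∇u_λ, ∇u_λ) = T(ξ, ∇u_λ) force strong convergence of the gradients and λ|u_λ|² → 0.)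 -/
open scoped RealInnerProductSpace
open Filter

/-- Key convergence mechanism of Propositions 6.3 and 7.1:
if `T` is a continuous coercive bilinear form on a Hilbert space `D`,
`ξ_n ⇀ ξ` weakly, `a_n ≥ 0` and `a_n + T(ξ_n, ξ_n) = T(ξ, ξ_n)` for all `n`,
then `ξ_n → ξ` strongly and `a_n → 0`. -/
theorem weak_to_strong_convergence
    {D : Type*} [NormedAddCommGroup D] [InnerProductSpace ℝ D] [CompleteSpace D]
    (M : ℝ) (hM : 0 < M)
    (T : D →L[ℝ] D →L[ℝ] ℝ)
    (hT : ∀ x : D, M⁻¹ * ‖x‖ ^ 2 ≤ T x x)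
    (ξ : D) (ξn : ℕ → D)
    (hweak : ∀ y : D, Tendsto (fun n => ⟪ξn n, y⟫) atTop (nhds ⟪ξ, y⟫))
    (a : ℕ → ℝ) (ha : ∀ n, 0 ≤ a n)
    (heq : ∀ n, a n + T (ξn n) (ξn n) = T ξ (ξn n)) :
    Tendsto (fun n => ‖ξn n - ξ‖) atTop (nhds 0) ∧ Tendsto a atTop (nhds 0) := by
  -- Riesz representative of x ↦ T x ξ
  set v := (InnerProductSpace.toDual ℝ D).symm (T.flip ξ) with hv
  have hrep : ∀ x : D, T x ξ = ⟪x, v⟫ := by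
    intro x
    have : (InnerProductSpace.toDual ℝ D) v = T.flip ξ := by
      simp [hv]
    have := congrArg (fun f => f x) this
    simp only [InnerProductSpace.toDual_apply_apply] at this
    rw [real_inner_comm]
    exact this.symm
  have hb : True := trivial
  have hbtend : Tendsto (fun n => T ξ ξ - T (ξn n) ξ) atTop (nhds 0) := by
    have h1 : Tendsto (fun n => T (ξn n) ξ) atTop (nhds (T ξ ξ)) := by
      simpa [hrep] using hweak v
    have := (tendsto_const_nhds (x := T ξ ξ) (f := atTop)).sub h1
    simpa using this
  have key : ∀ n, M⁻¹ * ‖ξn n - ξ‖ ^ 2 + a n ≤ (T ξ ξ - T (ξn n) ξ) := by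
    intro n
    have hc := hT (ξn n - ξ)
    have hexp : T (ξn n - ξ) (ξn n - ξ) = (T ξ ξ - T (ξn n) ξ) - a n := by
      have h := heq n
      simp only [map_sub, ContinuousLinearMap.sub_apply]
      ring_nf
      nlinarith [h]
    rw [hexp] at hc
    linarith
  have hanneg : ∀ n, 0 ≤ M⁻¹ * ‖ξn n - ξ‖ ^ 2 :=
    fun n => by positivity
  have hatend : Tendsto a atTop (nhds 0) :=
    squeeze_zero ha (fun n => by have h1 := key n; have h2 := hanneg n; linarith) hbtend
  refine ⟨?_, hatend⟩
  have hsq : Tendsto (fun n => ‖ξn n - ξ‖ ^ 2) atTop (nhds 0) := by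
    have hle : ∀ n, ‖ξn n - ξ‖ ^ 2 ≤ M * (T ξ ξ - T (ξn n) ξ) := by
      intro n
      have := key n
      have h2 : M⁻¹ * ‖ξn n - ξ‖ ^ 2 ≤ (T ξ ξ - T (ξn n) ξ) := by linarith [ha n]
      calc ‖ξn n - ξ‖ ^ 2 = M * (M⁻¹ * ‖ξn n - ξ‖ ^ 2) := by
            field_simp
        _ ≤ M * (T ξ ξ - T (ξn n) ξ) := by nlinarith
    have hMb : Tendsto (fun n => M * (T ξ ξ - T (ξn n) ξ)) atTop (nhds 0) := by
      simpa using hbtend.const_mul M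
    exact squeeze_zero (fun n => by positivity) hle hMb
  have := hsq.sqrt
  simpa [Real.sqrt_sq (norm_nonneg _)] using this
end

section
/- Let c ∈ ℝ be irrational. If φ : ℝ² → ℝ is continuously differentiable, 2π-periodic in each of its two variables, and satisfies ∂₁φ(z) + c·∂₂φ(z) = 0 for all z ∈ ℝ², then φ is constant. (This Weyl-equidistribution-type rigidity is what verifies the ergodicity Assumption 2.5 for the degenerate example with σ̃ = [[1, 1/c], [c, 1]]: the only invariant functions of the associated degenerate diffusion on the 2-torus are the constants.) -/
/-!
The derivative of `φ` along `(1, c)` vanishes, so `φ` is constant on the lines of slope `c` and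
factors as `φ (x, y) = g (y - c x)` with `g s = φ (0, s)`. Periodicity of `φ` in `y` makes `2π` a
period of `g`; moving along a line of slope `c` from `x = 0` to `x = 2π` and using periodicity in
`x` makes `2πc` a period too. Since `c` is irrational these two periods generate a dense subgroup
of `ℝ`, on which the continuous function `g` is constant, hence `g` and `φ` are constant.
-/

open Function

theorem Function.Periodic.of_mem_addSubgroupClosure {G α : Type*} [AddGroup G] {f : G → α}
    {s : Set G} (h : ∀ p ∈ s, Periodic f p) {p : G} (hp : p ∈ AddSubgroup.closure s) :
    Periodic f p := by
  induction hp using AddSubgroup.closure_induction with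
  | mem p hp => exact h p hp
  | zero => exact fun x => by rw [add_zero]
  | add p q _ _ hp hq => exact hp.add_period hq
  | neg p _ hp => exact hp.neg

theorem Continuous.eq_of_periodic_of_dense {G α : Type*} [AddGroup G] [TopologicalSpace G]
    [TopologicalSpace α] [T2Space α] {f : G → α} (hf : Continuous f) {S : AddSubgroup G}
    (hS : Dense (S : Set G)) (h : ∀ p ∈ S, Periodic f p) (x y : G) : f x = f y := by
  have hconst : f = fun _ => f 0 :=
    hf.ext_on hS continuous_const fun p hp => (h p hp).eq
  rw [hconst]

theorem Continuous.eq_of_periodic_of_irrational_div {α : Type*} [TopologicalSpace α] [T2Space α]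
    {f : ℝ → α} (hf : Continuous f) {a b : ℝ} (ha : Periodic f a) (hb : Periodic f b)
    (hab : Irrational (a / b)) (x y : ℝ) : f x = f y := by
  refine hf.eq_of_periodic_of_dense (dense_addSubgroupClosure_pair_iff.mpr hab)
    (fun p hp => Periodic.of_mem_addSubgroupClosure ?_ hp) x y
  rintro q (rfl | rfl)
  exacts [ha, hb]

theorem apply_add_smul_eq_of_fderiv_apply_eq_zero {E F : Type*} [NormedAddCommGroup E]
    [NormedSpace ℝ E] [NormedAddCommGroup F] [NormedSpace ℝ F] {f : E → F}
    (hf : Differentiable ℝ f) {v : E} (hv : ∀ z, fderiv ℝ f z v = 0) (z : E) (t : ℝ) :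
    f (z + t • v) = f z := by
  have hline : ∀ s : ℝ, HasDerivAt (fun s : ℝ => f (z + s • v)) 0 s := fun s => by
    have hmove : HasDerivAt (fun s : ℝ => z + s • v) v s := by
      simpa using ((hasDerivAt_id s).smul_const v).const_add z
    have hcomp := (hf _).hasFDerivAt.comp_hasDerivAt s hmove
    rwa [hv] at hcomp
  simpa using is_const_of_deriv_eq_zero (fun s => (hline s).differentiableAt)
    (fun s => (hline s).deriv) t 0

/-- Weyl-type rigidity for an irrational direction field:
if `c` is irrational and `φ : ℝ² → ℝ` is `C¹`, `2π`-periodic in each variable,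
and satisfies `∂₁φ + c·∂₂φ = 0` everywhere, then `φ` is constant. -/
theorem weyl_rigidity_irrational_direction
    (c : ℝ) (hc : Irrational c)
    (φ : ℝ × ℝ → ℝ) (hφ : ContDiff ℝ 1 φ)
    (hper : ∀ (z : ℝ × ℝ) (k : ℤ × ℤ),
      φ (z + (2 * Real.pi * (k.1 : ℝ), 2 * Real.pi * (k.2 : ℝ))) = φ z)
    (hdir : ∀ z : ℝ × ℝ, fderiv ℝ φ z (1, 0) + c * fderiv ℝ φ z (0, 1) = 0) :
    ∀ z w : ℝ × ℝ, φ z = φ w := by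
  have hdiff : Differentiable ℝ φ := hφ.differentiable one_ne_zero
  have hflow : ∀ z (t : ℝ), φ (z + t • (1, c)) = φ z := by
    refine apply_add_smul_eq_of_fderiv_apply_eq_zero hdiff fun z => ?_
    have hsplit : ((1 : ℝ), c) = (1, 0) + c • (0, 1) := by simp
    rw [hsplit, map_add, map_smul, smul_eq_mul, hdir]
  set g : ℝ → ℝ := fun s => φ (0, s)
  have hfactor : ∀ z : ℝ × ℝ, φ z = g (z.2 - c * z.1) := fun z => by
    show φ z = φ (0, _)
    rw [← hflow (0, z.2 - c * z.1) z.1]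
    congr 1
    ext <;> simp only [Prod.fst_add, Prod.snd_add, Prod.smul_mk, smul_eq_mul] <;> ring
  have hper_y : Periodic g (2 * Real.pi) := fun s => by
    simpa [g] using hper (0, s) (0, 1)
  have hper_cx : Periodic g (2 * Real.pi * c) := fun s => by
    show φ (0, _) = φ (0, _)
    rw [← hflow (0, s) (2 * Real.pi), ← hper (0, s + 2 * Real.pi * c) (1, 0)]
    congr 1
    ext <;> simp
  have hirr : Irrational (2 * Real.pi * c / (2 * Real.pi)) := by
    rwa [mul_div_cancel_left₀ c (by positivity)]
  have hg : Continuous g := hdiff.continuous.comp (continuous_const.prodMk continuous_id)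
  intro z w
  rw [hfactor z, hfactor w]
  exact hg.eq_of_periodic_of_irrational_div hper_cx hper_y hirr _ _
end

section
/- Let H be a real Hilbert space with inner product ⟨·,·⟩_H, and let V ⊆ H be a dense subspace which is itself a real Hilbert space under Π(u,v) = ⟨u,v⟩_H + s(u,v) + p(u,v), where s and p are positive semidefinite symmetric bilinear forms on V. Let B : V × V → ℝ be bilinear with α⁻¹·s(u,u) ≤ B(u,u) and |B(u,v)| ≤ α·√(s(u,u)·s(v,v)) for all u,v ∈ V and some α > 0, let F : V → ℝ be linear with |F(v)| ≤ C·√(s(v,v)) for some C ≥ 0, and let λ > 0. Suppose for each n ≥ 1 that u_n ∈ V satisfies λ⟨u_n,v⟩_H + B(u_n,v) + n⁻¹·p(u_n,v) = F(v) for all v ∈ V, and that u ∈ V satisfies λ⟨u,v⟩_H + B(u,v) = F(v) for all v ∈ V. Then, as n → ∞: ‖u_n − u‖_H → 0, s(u_n − u, u_n − u) → 0, and n⁻¹·p(u_n, u_n) → 0. (Abstract form of the vanishing-viscosity convergence of Proposition 7.1.) -/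
open scoped RealInnerProductSpace
open Filter

/-- Cauchy–Schwarz for a positive semidefinite symmetric bilinear form. -/
lemma bilin_cauchy_schwarz {V : Type*} [AddCommGroup V] [Module ℝ V]
    (p : V →ₗ[ℝ] V →ₗ[ℝ] ℝ) (hsymm : ∀ u v : V, p u v = p v u)
    (hpos : ∀ u : V, 0 ≤ p u u) (u v : V) :
    p u v ≤ Real.sqrt (p u u) * Real.sqrt (p v v) := by
  have hd : discrim (p v v) (2 * p u v) (p u u) ≤ 0 := by
    apply discrim_le_zero
    intro x
    have h := hpos (u + x • v)
    simp only [map_add, map_smul, LinearMap.add_apply, LinearMap.smul_apply,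
      smul_eq_mul] at h
    rw [hsymm v u] at h
    nlinarith [h]
  rw [discrim] at hd
  have hsq : (p u v) ^ 2 ≤ p u u * p v v := by nlinarith
  calc p u v ≤ |p u v| := le_abs_self _
    _ = Real.sqrt ((p u v) ^ 2) := (Real.sqrt_sq_eq_abs _).symm
    _ ≤ Real.sqrt (p u u * p v v) := Real.sqrt_le_sqrt hsq
    _ = Real.sqrt (p u u) * Real.sqrt (p v v) := Real.sqrt_mul (hpos u) _

/-- Abstract vanishing-viscosity convergence
(Proposition 7.1): if `u_n` solves the problem with added viscous form
`n⁻¹·p` and `u` solves the degenerate problem, then `u_n → u` in `H`-norm and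
in the energy seminorm `s`, and the viscous energy `n⁻¹·p(u_n, u_n) → 0`. -/
theorem vanishing_viscosity_convergence
    {H V : Type*}
    [NormedAddCommGroup H] [InnerProductSpace ℝ H] [CompleteSpace H]
    [NormedAddCommGroup V] [InnerProductSpace ℝ V] [CompleteSpace V]
    (ι : V →ₗ[ℝ] H) (hι_inj : Function.Injective ι) (hι_dense : DenseRange ι)
    (s p : V →ₗ[ℝ] V →ₗ[ℝ] ℝ)
    (hs_symm : ∀ u v : V, s u v = s v u) (hs_pos : ∀ u : V, 0 ≤ s u u)
    (hp_symm : ∀ u v : V, p u v = p v u) (hp_pos : ∀ u : V, 0 ≤ p u u)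
    (hPi : ∀ u v : V, ⟪u, v⟫ = ⟪ι u, ι v⟫ + s u v + p u v)
    (B : V →ₗ[ℝ] V →ₗ[ℝ] ℝ) (α : ℝ) (hα : 0 < α)
    (hB_coer : ∀ u : V, α⁻¹ * s u u ≤ B u u)
    (hB_bdd : ∀ u v : V, |B u v| ≤ α * Real.sqrt (s u u * s v v))
    (F : V →ₗ[ℝ] ℝ) (C : ℝ) (hC : 0 ≤ C)
    (hF : ∀ v : V, |F v| ≤ C * Real.sqrt (s v v))
    (lam : ℝ) (hlam : 0 < lam)
    (un : ℕ → V)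
    (hun : ∀ n : ℕ, 1 ≤ n → ∀ v : V,
      lam * ⟪ι (un n), ι v⟫ + B (un n) v + (n : ℝ)⁻¹ * p (un n) v = F v)
    (u : V)
    (hu : ∀ v : V, lam * ⟪ι u, ι v⟫ + B u v = F v) :
    Tendsto (fun n => ‖ι (un n) - ι u‖) atTop (nhds 0) ∧
    Tendsto (fun n : ℕ => s (un n - u) (un n - u)) atTop (nhds 0) ∧
    Tendsto (fun n : ℕ => (n : ℝ)⁻¹ * p (un n) (un n)) atTop (nhds 0) := by
  -- the constant in the bound `e n ≤ K / √n`
  set K : ℝ := Real.sqrt (α * C ^ 2) * Real.sqrt (p u u) with hK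
  have hK0 : 0 ≤ K := mul_nonneg (Real.sqrt_nonneg _) (Real.sqrt_nonneg _)
  -- key identity for n ≥ 1
  have key : ∀ n : ℕ, 1 ≤ n →
      lam * ‖ι (un n) - ι u‖ ^ 2 + B (un n - u) (un n - u)
        + (n : ℝ)⁻¹ * p (un n) (un n) = (n : ℝ)⁻¹ * p (un n) u := by
    intro n hn
    have h1a := hun n hn (un n)
    have h1b := hun n hn u
    have h2a := hu (un n)
    have h2b := hu u
    have hnorm : ‖ι (un n) - ι u‖ ^ 2
        = ⟪ι (un n) - ι u, ι (un n) - ι u⟫ := by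
      rw [real_inner_self_eq_norm_sq]
    rw [hnorm]
    simp only [map_sub, LinearMap.sub_apply, inner_sub_left, inner_sub_right]
    linear_combination h1a - h1b - h2a + h2b
  -- a priori bound on the viscous energy: `(n:ℝ)⁻¹ * p (un n) (un n) ≤ α * C ^ 2`
  have apriori : ∀ n : ℕ, 1 ≤ n → (n : ℝ)⁻¹ * p (un n) (un n) ≤ α * C ^ 2 := by
    intro n hn
    have h1a := hun n hn (un n)
    set x := Real.sqrt (s (un n) (un n)) with hx
    have hx0 : 0 ≤ x := Real.sqrt_nonneg _
    have hx2 : x ^ 2 = s (un n) (un n) := Real.sq_sqrt (hs_pos _)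
    have hFb : F (un n) ≤ C * x := le_trans (le_abs_self _) (hF _)
    have hBb : α⁻¹ * x ^ 2 ≤ B (un n) (un n) := by rw [hx2]; exact hB_coer _
    have hin : (0:ℝ) ≤ ⟪ι (un n), ι (un n)⟫ := real_inner_self_nonneg
    -- from the equation: α⁻¹ x² + n⁻¹ p ≤ C x
    have hmain : α⁻¹ * x ^ 2 + (n : ℝ)⁻¹ * p (un n) (un n) ≤ C * x := by
      nlinarith [mul_nonneg hlam.le hin]
    have hp' : 0 ≤ (n : ℝ)⁻¹ * p (un n) (un n) :=
      mul_nonneg (by positivity) (hp_pos _)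
    have hmain2 : α⁻¹ * x ^ 2 ≤ C * x := by linarith
    have h3 : x ^ 2 ≤ C * α * x := by
      have h4 := mul_le_mul_of_nonneg_left hmain2 hα.le
      rw [← mul_assoc, mul_inv_cancel₀ hα.ne', one_mul] at h4
      nlinarith [h4]
    have hxle : x ≤ C * α := by
      nlinarith [h3, mul_nonneg hC hα.le]
    have h5 : C * x ≤ C * (C * α) := mul_le_mul_of_nonneg_left hxle hC
    have h6 : 0 ≤ α⁻¹ * x ^ 2 := mul_nonneg (inv_pos.2 hα).le (sq_nonneg x)
    nlinarith [hmain, h5, h6]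
  -- the error bound `e n ≤ K / √n`
  have ebound : ∀ n : ℕ, 1 ≤ n →
      (n : ℝ)⁻¹ * p (un n) u ≤ (Real.sqrt n)⁻¹ * K := by
    intro n hn
    have hn0 : (0:ℝ) < n := by exact_mod_cast hn
    have hcs := bilin_cauchy_schwarz p hp_symm hp_pos (un n) u
    have hpb : p (un n) (un n) ≤ (n : ℝ) * (α * C ^ 2) := by
      have := apriori n hn
      rw [inv_mul_le_iff₀ hn0] at this
      linarith [this]
    have h1 : Real.sqrt (p (un n) (un n)) ≤ Real.sqrt n * Real.sqrt (α * C ^ 2) := by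
      rw [← Real.sqrt_mul hn0.le]
      exact Real.sqrt_le_sqrt hpb
    have h2 : p (un n) u ≤ Real.sqrt n * K := by
      calc p (un n) u ≤ Real.sqrt (p (un n) (un n)) * Real.sqrt (p u u) := hcs
        _ ≤ (Real.sqrt n * Real.sqrt (α * C ^ 2)) * Real.sqrt (p u u) :=
            mul_le_mul_of_nonneg_right h1 (Real.sqrt_nonneg _)
        _ = Real.sqrt n * K := by rw [hK]; ring
    have hsn : Real.sqrt n * Real.sqrt n = (n : ℝ) := Real.mul_self_sqrt hn0.le
    have hsn0 : (0:ℝ) < Real.sqrt n := Real.sqrt_pos.2 hn0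
    have h3 : (n : ℝ)⁻¹ * Real.sqrt n = (Real.sqrt n)⁻¹ := by
      rw [show ((n : ℝ))⁻¹ = (Real.sqrt n * Real.sqrt n)⁻¹ by rw [hsn],
        mul_inv, mul_assoc, inv_mul_cancel₀ hsn0.ne', mul_one]
    calc (n : ℝ)⁻¹ * p (un n) u ≤ (n : ℝ)⁻¹ * (Real.sqrt n * K) :=
        mul_le_mul_of_nonneg_left h2 (by positivity)
      _ = (Real.sqrt n)⁻¹ * K := by rw [← mul_assoc, h3]
  -- the majorant tends to 0
  have hmaj : Tendsto (fun n : ℕ => (Real.sqrt n)⁻¹ * K) atTop (nhds 0) := by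
    have h1 : Tendsto (fun n : ℕ => Real.sqrt n) atTop atTop := by
      have := (tendsto_rpow_atTop (by norm_num : (0:ℝ) < 1/2)).comp
        (tendsto_natCast_atTop_atTop (R := ℝ))
      simpa [Function.comp_def, Real.sqrt_eq_rpow] using this
    have h2 := h1.inv_tendsto_atTop
    simpa using h2.mul_const K
  -- nonnegativity of the three pieces and bound by e n, eventually
  have hBpos : ∀ w : V, 0 ≤ B w w := fun w =>
    le_trans (mul_nonneg (inv_pos.2 hα).le (hs_pos w)) (hB_coer w)
  have hev : ∀ᶠ n : ℕ in atTop, 1 ≤ n := eventually_ge_atTop 1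
  refine ⟨?_, ?_, ?_⟩
  · -- H-norm convergence
    have hsq : Tendsto (fun n : ℕ => ‖ι (un n) - ι u‖ ^ 2) atTop (nhds 0) := by
      apply squeeze_zero' (hev.mono fun n _ => by positivity)
        (g := fun n : ℕ => lam⁻¹ * ((Real.sqrt n)⁻¹ * K))
      · refine hev.mono fun n hn => ?_
        have hk := key n hn
        have he := ebound n hn
        have h1 : lam * ‖ι (un n) - ι u‖ ^ 2 ≤ (Real.sqrt n)⁻¹ * K := by
          linarith [hBpos (un n - u),
            mul_nonneg (by positivity : (0:ℝ) ≤ (n:ℝ)⁻¹) (hp_pos (un n))]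
        have h2 := mul_le_mul_of_nonneg_left h1 (inv_pos.2 hlam).le
        rwa [← mul_assoc, inv_mul_cancel₀ hlam.ne', one_mul] at h2
      · simpa using hmaj.const_mul lam⁻¹
    have h4 : Tendsto (fun n : ℕ => Real.sqrt (‖ι (un n) - ι u‖ ^ 2))
        atTop (nhds 0) := by
      simpa [Function.comp_def] using (Real.continuous_sqrt.tendsto 0).comp hsq
    exact h4.congr fun n => Real.sqrt_sq (norm_nonneg _)
  · -- s-seminorm convergence
    apply squeeze_zero' (hev.mono fun n _ => hs_pos _)
      (g := fun n : ℕ => α * ((Real.sqrt n)⁻¹ * K))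
    · refine hev.mono fun n hn => ?_
      have hk := key n hn
      have he := ebound n hn
      have hc := hB_coer (un n - u)
      have h1 : α⁻¹ * s (un n - u) (un n - u) ≤ (Real.sqrt n)⁻¹ * K := by
        linarith [mul_nonneg hlam.le (sq_nonneg ‖ι (un n) - ι u‖),
          mul_nonneg (by positivity : (0:ℝ) ≤ (n:ℝ)⁻¹) (hp_pos (un n))]
      have h2 := mul_le_mul_of_nonneg_left h1 hα.le
      rwa [← mul_assoc, mul_inv_cancel₀ hα.ne', one_mul] at h2
    · simpa using hmaj.const_mul α
  · -- viscous energy convergence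
    apply squeeze_zero'
      (hev.mono fun n _ => mul_nonneg (by positivity) (hp_pos _))
      (g := fun n : ℕ => (Real.sqrt n)⁻¹ * K)
    · refine hev.mono fun n hn => ?_
      have hk := key n hn
      have he := ebound n hn
      linarith [hBpos (un n - u), mul_nonneg hlam.le (sq_nonneg ‖ι (un n) - ι u‖)]
    · exact hmaj
end
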